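/- (q-Racah three-term relation, contiguous in γ) Let R_n(μ(x); α,β,γ,δ | q) denote the q-Racah polynomial with μ(x) = q^{−x} + γδ q^{x+1}. Then (q^{−x} − qγ)(1 − γδ q^{x+1}) R_n(μ(x); α,β,qγ,δ | q) + (qγ − γδ q^{x+1})(1 − q^{−x}) R_n(μ(x−1); α,β,qγ,δ | q) = (q^{−x} − γδ q^{x+1})(1 − qγ) R_n(μ(x); α,β,γ,δ | q), for all integers x and nonnegative integers n for which the polynomials are defined. -/

import Mathlib

open Finset

/-- The q-Pochhammer symbol `(a;q)_k = ∏_{i=0}^{k-1} (1 - a qⁱ)`. -/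
def qPoch (q a : ℂ) (k : ℕ) : ℂ := ∏ i ∈ range k, (1 - a * q ^ i)

/-- The q-Racah polynomial
`R_n(μ(x); α,β,γ,δ | q) = ₄φ₃(q^{−n}, αβq^{n+1}, q^{−x}, γδq^{x+1}; αq, βδq, γq; q, q)`,
as a terminating sum (the upper parameter `q^{-n}` forces termination at `n`). -/
noncomputable def qRacah (q α β γ δ : ℂ) (n : ℕ) (x : ℤ) : ℂ :=
  ∑ k ∈ range (n + 1),
    (qPoch q (q ^ (-(n : ℤ))) k * qPoch q (α * β * q ^ ((n : ℤ) + 1)) k *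
        qPoch q (q ^ (-x)) k * qPoch q (γ * δ * q ^ (x + 1)) k) /
      (qPoch q q k * qPoch q (α * q) k * qPoch q (β * δ * q) k * qPoch q (γ * q) k) * q ^ k

/-
Each q-Racah polynomial is a sum over `k` of a weight independent of `γ` and `x` times
`(q^{-x};q)_k (γδq^{x+1};q)_k / (γq;q)_k`, and the relation already holds term by term.
Raising `γ` or lowering `x` multiplies one upper parameter by `q`, and
`(1 - a)(qa;q)_k = (a;q)_k (1 - aq^k)` reduces the termwise identity, after clearing the
Pochhammer symbols, to the linear identity
`(v - g)(1 - uq^k) + (g - u)(1 - vq^k) = (v - u)(1 - gq^k)` with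
`u = γδq^{x+1}`, `v = q^{-x}`, `g = γq`.
-/

lemma qPoch_succ (q a : ℂ) (k : ℕ) : qPoch q a (k + 1) = qPoch q a k * (1 - a * q ^ k) :=
  prod_range_succ _ k

lemma qPoch_succ' (q a : ℂ) (k : ℕ) : qPoch q a (k + 1) = (1 - a) * qPoch q (q * a) k := by
  rw [qPoch, prod_range_succ', pow_zero, mul_one, mul_comm]
  congr 1
  exact prod_congr rfl fun i _ => by ring

lemma one_sub_mul_qPoch_mul (q a : ℂ) (k : ℕ) :
    (1 - a) * qPoch q (q * a) k = qPoch q a k * (1 - a * q ^ k) := by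
  rw [← qPoch_succ', qPoch_succ]

lemma qPoch_contiguous (q u v g : ℂ) (k : ℕ) (hg : qPoch q g k ≠ 0)
    (hqg : qPoch q (q * g) k ≠ 0) :
    (v - g) * (1 - u) * (qPoch q v k * qPoch q (q * u) k / qPoch q (q * g) k) +
        (g - u) * (1 - v) * (qPoch q (q * v) k * qPoch q u k / qPoch q (q * g) k) =
      (v - u) * (1 - g) * (qPoch q v k * qPoch q u k / qPoch q g k) := by
  have hu := one_sub_mul_qPoch_mul q u k
  have hv := one_sub_mul_qPoch_mul q v k
  have hg' := one_sub_mul_qPoch_mul q g k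
  set c := qPoch q v k * qPoch q u k / qPoch q (q * g) k
  calc _ = c * ((v - g) * (1 - u * q ^ k) + (g - u) * (1 - v * q ^ k)) := by
          simp only [c]
          linear_combination (v - g) * qPoch q v k / qPoch q (q * g) k * hu +
            (g - u) * qPoch q u k / qPoch q (q * g) k * hv
    _ = c * ((v - u) * (1 - g * q ^ k)) := by ring
    _ = _ := by
          simp only [c]
          field_simp
          linear_combination (u - v) * qPoch q v k * qPoch q u k * hg'

lemma qRacah_eq_sum (q α β γ δ : ℂ) (n : ℕ) (x : ℤ) :
    qRacah q α β γ δ n x = ∑ k ∈ range (n + 1),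
      qPoch q (q ^ (-(n : ℤ))) k * qPoch q (α * β * q ^ ((n : ℤ) + 1)) k /
          (qPoch q q k * qPoch q (α * q) k * qPoch q (β * δ * q) k) * q ^ k *
        (qPoch q (q ^ (-x)) k * qPoch q (γ * δ * q ^ (x + 1)) k / qPoch q (γ * q) k) := by
  refine sum_congr rfl fun k _ => ?_
  simp only [div_eq_mul_inv, mul_inv]
  ring

/-- the three-term relation contiguous in `γ` for q-Racah polynomials:
`(q^{−x} − qγ)(1 − γδq^{x+1}) R_n(μ(x); α,β,qγ,δ)
  + (qγ − γδq^{x+1})(1 − q^{−x}) R_n(μ(x−1); α,β,qγ,δ)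
  = (q^{−x} − γδq^{x+1})(1 − qγ) R_n(μ(x); α,β,γ,δ)`. -/
theorem qRacah_contiguous_gamma (q α β γ δ : ℂ) (n : ℕ) (x : ℤ) (hq0 : q ≠ 0)
    (hden : ∀ k ≤ n, qPoch q q k ≠ 0 ∧ qPoch q (α * q) k ≠ 0 ∧
      qPoch q (β * δ * q) k ≠ 0 ∧ qPoch q (γ * q) k ≠ 0 ∧ qPoch q (γ * q ^ 2) k ≠ 0) :
    (q ^ (-x) - q * γ) * (1 - γ * δ * q ^ (x + 1)) * qRacah q α β (q * γ) δ n x +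
      (q * γ - γ * δ * q ^ (x + 1)) * (1 - q ^ (-x)) * qRacah q α β (q * γ) δ n (x - 1) =
    (q ^ (-x) - γ * δ * q ^ (x + 1)) * (1 - q * γ) * qRacah q α β γ δ n x := by
  have hv : q ^ (-(x - 1)) = q * q ^ (-x) := by
    rw [neg_sub, sub_eq_add_neg, zpow_add₀ hq0, zpow_one]
  have hu : q * γ * δ * q ^ (x - 1 + 1) = γ * δ * q ^ (x + 1) := by
    rw [sub_add_cancel, zpow_add_one₀ hq0]
    ring
  have hqu : q * γ * δ * q ^ (x + 1) = q * (γ * δ * q ^ (x + 1)) := by ring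
  have hqg : q * γ * q = q * (γ * q) := by ring
  simp only [qRacah_eq_sum, hv, hu, hqu, hqg, mul_sum, ← sum_add_distrib]
  refine sum_congr rfl fun k hk => ?_
  obtain ⟨-, -, -, hg, hg2⟩ := hden k (Nat.lt_succ_iff.mp (mem_range.mp hk))
  rw [show γ * q ^ 2 = q * (γ * q) by ring] at hg2
  linear_combination
    (qPoch q (q ^ (-(n : ℤ))) k * qPoch q (α * β * q ^ ((n : ℤ) + 1)) k /
        (qPoch q q k * qPoch q (α * q) k * qPoch q (β * δ * q) k) * q ^ k) *
      qPoch_contiguous q (γ * δ * q ^ (x + 1)) (q ^ (-x)) (γ * q) k hg hg2
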